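/- arXiv:1412.7001 — 4 statements merged into one kernel-verified Lean document; each statement's English description precedes it below -/
import Mathlib

section
/- Let S be the quotient of the polynomial ring ℂ[x_0, ..., x_{p-1}] (p an odd prime ≥ 5) by the ideal generated by all monomials x_{i+k} x_{-i+k} for 1 ≤ i ≤ (p-3)/2 and 0 ≤ k ≤ p-1 (indices mod p). Then for every degree k ≥ 1, dim_ℂ S_k = k·p, so the Hilbert series of S is (1 + (p-2)t + t^2)/(1-t)^2. -/
open MvPolynomial PowerSeries

/-- The monomial ideal of a cycle of `p` lines in `ℙ^{p-1}`: generated by the monomials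
`x_{k+i} x_{k-i}` for `1 ≤ i ≤ (p-3)/2` and all `k` (indices mod `p`). -/
noncomputable def cycleIdeal (p : ℕ) : Ideal (MvPolynomial (ZMod p) ℂ) :=
  Ideal.span {m | ∃ i k : ZMod p, 1 ≤ i.val ∧ i.val ≤ (p - 3) / 2 ∧
    m = X (k + i) * X (k - i)}

/-- The degree-`k` homogeneous component of the quotient ring `S = ℂ[x]/cycleIdeal`. -/
noncomputable def cycleDeg (p k : ℕ) :
    Submodule ℂ (MvPolynomial (ZMod p) ℂ ⧸ cycleIdeal p) :=
  Submodule.map (Ideal.Quotient.mkₐ ℂ (cycleIdeal p)).toLinearMap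
    (homogeneousSubmodule (ZMod p) ℂ k)

/-!
For odd `p`, every residue other than `0, ±1` is of the form `±2i` with `1 ≤ i ≤ (p-3)/2`, so
`cycleIdeal p` is the monomial ideal generated by the products `x_u x_v` of non-adjacent vertices
of the `p`-cycle. The degree-`k` part of the quotient therefore has as basis the degree-`k`
monomials divisible by no such product, i.e. (for `p ≥ 4`) those supported on a single line
`{a, a + 1}` of the cycle. For `k ≥ 1` these are the `x_a^(j+1) x_(a+1)^(k-1-j)` with `a` mod `p`
and `j < k`, so there are `k p` of them, which gives the Hilbert series.
-/

open Finsupp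

namespace ZMod

theorem natCast_ne_zero_of_lt {p n : ℕ} (h₀ : n ≠ 0) (h : n < p) : (n : ZMod p) ≠ 0 := by
  rw [Ne, natCast_eq_zero_iff]
  exact fun hdvd => absurd (Nat.le_of_dvd (Nat.pos_of_ne_zero h₀) hdvd) (by omega)

end ZMod

namespace Finsupp

theorem single_add_single_le_iff {σ : Type*} {u v : σ} (huv : u ≠ v) (d : σ →₀ ℕ) :
    single u 1 + single v 1 ≤ d ↔ u ∈ d.support ∧ v ∈ d.support := by
  classical
  simp only [le_def, mem_support_iff, add_apply, single_apply]
  refine ⟨fun h => ⟨?_, ?_⟩, fun ⟨hu, hv⟩ x => ?_⟩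
  · have := h u; simp only [if_true, if_neg huv.symm] at this; omega
  · have := h v; simp only [if_true, if_neg huv] at this; omega
  · split_ifs <;> subst_vars <;> first | omega | exact absurd rfl huv

theorem eq_single_add_single_of_support_subset {σ M : Type*} [DecidableEq σ]
    [AddCommMonoid M] {a b : σ} (hab : a ≠ b) {d : σ →₀ M} (hd : d.support ⊆ {a, b}) :
    d = single a (d a) + single b (d b) := by
  ext x
  rcases eq_or_ne x a with rfl | hxa
  · simp [hab]
  rcases eq_or_ne x b with rfl | hxb
  · simp [hab.symm]
  have : x ∉ d.support := fun hx => by simpa [hxa, hxb] using hd hx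
  simp [notMem_support_iff.mp this, hxa.symm, hxb.symm]

end Finsupp

namespace MvPolynomial

theorem X_mul_X_eq_monomial {σ R : Type*} [CommSemiring R] (u v : σ) :
    (X u * X v : MvPolynomial σ R) = monomial (single u 1 + single v 1) 1 := by
  rw [X, X, monomial_mul, one_mul]

variable {σ R : Type*} [CommRing R] [Nontrivial R]

theorem finrank_map_homogeneousSubmodule_of_eq_span_monomial {I : Ideal (MvPolynomial σ R)}
    {E : Set (σ →₀ ℕ)} (hI : I = Ideal.span ((fun e => monomial e (1 : R)) '' E)) (k : ℕ) :
    Module.finrank R ((homogeneousSubmodule σ R k).map (Ideal.Quotient.mkₐ R I).toLinearMap) =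
      Set.ncard {d : σ →₀ ℕ | d.degree = k ∧ ∀ e ∈ E, ¬ e ≤ d} := by
  subst hI
  set I := Ideal.span ((fun e => monomial e (1 : R)) '' E)
  set mk := (Ideal.Quotient.mkₐ R I).toLinearMap
  set s := {d : σ →₀ ℕ | d.degree = k ∧ ∀ e ∈ E, ¬ e ≤ d}
  have hmap : (homogeneousSubmodule σ R k).map mk = (restrictSupport R s).map mk := by
    rw [homogeneousSubmodule_eq_finsupp_supported]
    refine le_antisymm ?_ (Submodule.map_mono (restrictSupport_mono R fun d hd => hd.1))
    rw [AddMonoidAlgebra.supported_eq_span_single, Submodule.map_span, Submodule.span_le]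
    rintro _ ⟨_, ⟨d, hd, rfl⟩, rfl⟩
    by_cases hE : ∀ e ∈ E, ¬ e ≤ d
    · exact Submodule.mem_map_of_mem (single_mem_supported R _ ⟨hd, hE⟩)
    · push Not at hE
      have hI : monomial d (1 : R) ∈ I := mem_ideal_span_monomial_image.mpr fun d' hd' => by
        rwa [Finset.mem_singleton.mp (support_monomial_subset hd')]
      show Ideal.Quotient.mk I (monomial d 1) ∈ _
      rw [Ideal.Quotient.eq_zero_iff_mem.mpr hI]
      exact Submodule.zero_mem _
  have hinj : Function.Injective (mk ∘ₗ (restrictSupport R s).subtype) := by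
    rw [← LinearMap.ker_eq_bot, eq_bot_iff]
    rintro ⟨f, hf⟩ h0
    have hI : f ∈ I := Ideal.Quotient.eq_zero_iff_mem.mp h0
    rw [Submodule.mem_bot, Submodule.mk_eq_zero, ← support_eq_empty,
      Finset.eq_empty_iff_forall_notMem]
    intro d hd
    obtain ⟨e, he, hed⟩ := mem_ideal_span_monomial_image.mp hI d hd
    exact (hf hd).2 e he hed
  rw [hmap, ← Submodule.range_subtype (restrictSupport R s), ← LinearMap.range_comp,
    LinearMap.finrank_range_of_inj hinj,
    Module.finrank_eq_nat_card_basis (basisRestrictSupport R s), Nat.card_coe_set_eq]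

end MvPolynomial

namespace PowerSeries

theorem mk_mul_one_sub_X_sq {R : Type*} [CommRing R] (c : R) {A : ℕ → R}
    (h₀ : A 0 = 1) (h : ∀ n, 1 ≤ n → A n = n * c) :
    mk A * (1 - X) ^ 2 =
      1 + C (c - 2) * X + X ^ 2 := by
  have hA : mk A = 1 + X *
      (C c * mk fun n => ((1 + n).choose 1 : R)) := by
    ext (_ | n)
    · simp [h₀]
    · rw [coeff_mk, h _ (by omega)]
      simp [coeff_succ_X_mul]
      ring
  rw [hA, add_mul, mul_assoc, mul_assoc, mk_add_choose_mul_one_sub_pow_eq_one R 1]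
  simp only [map_sub, map_ofNat]
  ring

end PowerSeries

variable {p : ℕ}

def IsChord (u v : ZMod p) : Prop := u ≠ v ∧ u ≠ v + 1 ∧ v ≠ u + 1

theorem IsChord.symm {u v : ZMod p} (h : IsChord u v) : IsChord v u :=
  ⟨h.1.symm, h.2.2, h.2.1⟩

theorem isChord_iff_val (hp : 1 < p) {u v : ZMod p} :
    IsChord u v ↔ 2 ≤ (u - v).val ∧ (u - v).val + 2 ≤ p := by
  have : Fact (1 < p) := ⟨hp⟩
  have h0 : u = v ↔ (u - v).val = 0 := by rw [ZMod.val_eq_zero, sub_eq_zero]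
  have h1 : u = v + 1 ↔ (u - v).val = 1 := by
    rw [← ZMod.val_one p, (ZMod.val_injective p).eq_iff, sub_eq_iff_eq_add']
  have h2 : v = u + 1 ↔ (u - v).val = p - 1 := by
    have hneg : (-1 : ZMod p).val = p - 1 := by
      rw [ZMod.neg_val, if_neg one_ne_zero, ZMod.val_one]
    rw [← hneg, (ZMod.val_injective p).eq_iff]
    exact ⟨fun h => by rw [h]; ring, fun h => by linear_combination -h⟩
  have := ZMod.val_lt (u - v)
  simp only [IsChord, ne_eq, h0, h1, h2]
  omega

theorem isChord_add_sub {i : ZMod p} (k : ZMod p) (hi₁ : 1 ≤ i.val)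
    (hi₂ : i.val ≤ (p - 3) / 2) : IsChord (k + i) (k - i) := by
  have hval : (i + i).val = i.val + i.val := ZMod.val_add_of_lt (by omega)
  rw [isChord_iff_val (by omega), add_sub_sub_cancel, hval]
  omega

theorem exists_add_sub_eq_of_even (hodd : Odd p) {u v : ZMod p} (h : IsChord u v)
    (heven : Even (u - v).val) :
    ∃ i k : ZMod p, 1 ≤ i.val ∧ i.val ≤ (p - 3) / 2 ∧ k + i = u ∧ k - i = v := by
  have : NeZero p := ⟨hodd.pos.ne'⟩
  obtain ⟨m, hm⟩ := heven
  have hp : 1 < p := by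
    by_contra! hp
    obtain rfl : p = 1 := by have := hodd.pos; omega
    exact h.1 (Subsingleton.elim u v)
  obtain ⟨h₁, h₂⟩ := (isChord_iff_val hp).mp h
  have hi : ((m : ℕ) : ZMod p).val = m := ZMod.val_natCast_of_lt (by omega)
  obtain ⟨r, rfl⟩ := hodd
  refine ⟨m, v + m, by omega, by omega, ?_, by ring⟩
  have : ((m + m : ℕ) : ZMod (2 * r + 1)) = u - v := by rw [← hm, ZMod.natCast_zmod_val]
  push_cast at this
  linear_combination this

theorem exists_generator_of_isChord (hodd : Odd p) {u v : ZMod p} (h : IsChord u v) :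
    ∃ i k : ZMod p, 1 ≤ i.val ∧ i.val ≤ (p - 3) / 2 ∧
      single (k + i) 1 + single (k - i) 1 = single u 1 + single v 1 := by
  have : NeZero p := ⟨hodd.pos.ne'⟩
  rcases Nat.even_or_odd (u - v).val with heven | hodd'
  · obtain ⟨i, k, hi₁, hi₂, rfl, rfl⟩ := exists_add_sub_eq_of_even hodd h heven
    exact ⟨i, k, hi₁, hi₂, rfl⟩
  · have hneg : (v - u).val = p - (u - v).val := by
      rw [← neg_sub, ZMod.neg_val, if_neg (sub_ne_zero.mpr h.1)]
    have heven : Even (v - u).val := by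
      rw [hneg]; exact Nat.Odd.sub_odd hodd hodd'
    obtain ⟨i, k, hi₁, hi₂, rfl, rfl⟩ := exists_add_sub_eq_of_even hodd h.symm heven
    exact ⟨i, k, hi₁, hi₂, add_comm _ _⟩

def chordExponents (p : ℕ) : Set (ZMod p →₀ ℕ) :=
  {e | ∃ u v : ZMod p, IsChord u v ∧ e = single u 1 + single v 1}

theorem cycleIdeal_eq_span_chordExponents (hodd : Odd p) :
    cycleIdeal p =
      Ideal.span ((fun e => MvPolynomial.monomial e (1 : ℂ)) '' chordExponents p) := by
  rw [cycleIdeal]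
  congr 1
  ext f
  constructor
  · rintro ⟨i, k, hi₁, hi₂, rfl⟩
    exact ⟨_, ⟨k + i, k - i, isChord_add_sub k hi₁ hi₂, rfl⟩,
      (MvPolynomial.X_mul_X_eq_monomial _ _).symm⟩
  · rintro ⟨_, ⟨u, v, h, rfl⟩, rfl⟩
    obtain ⟨i, k, hi₁, hi₂, he⟩ := exists_generator_of_isChord hodd h
    exact ⟨i, k, hi₁, hi₂, by rw [MvPolynomial.X_mul_X_eq_monomial, he]⟩

theorem forall_not_le_chordExponents_iff (d : ZMod p →₀ ℕ) :
    (∀ e ∈ chordExponents p, ¬ e ≤ d) ↔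
      ∀ u ∈ d.support, ∀ v ∈ d.support, ¬ IsChord u v := by
  simp only [chordExponents, Set.mem_ofPred_eq, forall_exists_index, and_imp]
  constructor
  · intro h u hu v hv huv
    exact h _ u v huv rfl ((single_add_single_le_iff huv.1 d).mpr ⟨hu, hv⟩)
  · rintro h _ u v huv rfl hle
    obtain ⟨hu, hv⟩ := (single_add_single_le_iff huv.1 d).mp hle
    exact h u hu v hv huv

theorem forall_not_isChord_iff (hp : 4 ≤ p) (s : Finset (ZMod p)) :
    (∀ u ∈ s, ∀ v ∈ s, ¬ IsChord u v) ↔ ∃ a, s ⊆ {a, a + 1} := by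
  constructor
  · intro h
    by_contra! hs
    have h₁ : (1 : ZMod p) ≠ 0 :=
      mod_cast ZMod.natCast_ne_zero_of_lt (n := 1) (by norm_num) (by omega)
    have h₂ : (2 : ZMod p) ≠ 0 :=
      mod_cast ZMod.natCast_ne_zero_of_lt (n := 2) (by norm_num) (by omega)
    have h₃ : (3 : ZMod p) ≠ 0 :=
      mod_cast ZMod.natCast_ne_zero_of_lt (n := 3) (by norm_num) (by omega)
    have adj : ∀ u ∈ s, ∀ v ∈ s, u = v ∨ u = v + 1 ∨ v = u + 1 := by
      intro u hu v hv
      have := h u hu v hv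
      simp only [IsChord, not_and_or, not_not] at this
      tauto
    obtain ⟨u, hu⟩ : s.Nonempty :=
      Finset.nonempty_iff_ne_empty.mpr fun h0 => hs 0 (by simp [h0])
    obtain ⟨v, hv, hv'⟩ := Finset.not_subset.mp (hs u)
    simp only [Finset.mem_insert, Finset.mem_singleton, not_or] at hv'
    have huv : u = v + 1 := by have := adj u hu v hv; tauto
    obtain ⟨w, hw, hw'⟩ := Finset.not_subset.mp (hs v)
    simp only [Finset.mem_insert, Finset.mem_singleton, not_or] at hw'
    have hwu : w = u + 1 := by
      rcases adj u hu w hw with h | h | h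
      · exact absurd (h ▸ huv) hw'.2
      · exact absurd (add_right_cancel (h.symm.trans huv)) hw'.1
      · exact h
    rcases adj v hv w hw with h | h | h
    · exact h₂ (by linear_combination -h - hwu - huv)
    · exact h₃ (by linear_combination -h - hwu - huv)
    · exact h₁ (by linear_combination h - hwu - huv)
  · rintro ⟨a, ha⟩ u hu v hv ⟨huv, huv₁, hvu₁⟩
    have hu := ha hu
    have hv := ha hv
    simp only [Finset.mem_insert, Finset.mem_singleton] at hu hv
    rcases hu with rfl | rfl <;> rcases hv with rfl | rfl <;> simp_all

def lineExponents (p k : ℕ) : Set (ZMod p →₀ ℕ) :=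
  {d | d.degree = k ∧ ∃ a, d.support ⊆ {a, a + 1}}

noncomputable def toLineExponent (p k : ℕ) (x : ZMod p × Fin k) : ZMod p →₀ ℕ :=
  single x.1 ((x.2 : ℕ) + 1) + single (x.1 + 1) (k - 1 - x.2)

theorem toLineExponent_support_subset {k : ℕ} (x : ZMod p × Fin k) :
    (toLineExponent p k x).support ⊆ {x.1, x.1 + 1} :=
  support_add.trans <| Finset.union_subset
    (support_single_subset.trans (by simp)) (support_single_subset.trans (by simp))

theorem toLineExponent_injective (hp : 3 ≤ p) (k : ℕ) :
    Function.Injective (toLineExponent p k) := by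
  have h₁ : (1 : ZMod p) ≠ 0 :=
    mod_cast ZMod.natCast_ne_zero_of_lt (n := 1) (by norm_num) (by omega)
  have h₂ : (2 : ZMod p) ≠ 0 :=
    mod_cast ZMod.natCast_ne_zero_of_lt (n := 2) (by norm_num) (by omega)
  have hfst : ∀ x : ZMod p × Fin k, toLineExponent p k x x.1 = x.2 + 1 := fun x => by
    simp [toLineExponent, h₁]
  have fst_eq_succ : ∀ x y, toLineExponent p k x = toLineExponent p k y → x.1 ≠ y.1 →
      x.1 = y.1 + 1 := fun x y hxy hne => by
    have : x.1 ∈ (toLineExponent p k y).support := by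
      rw [← hxy, Finsupp.mem_support_iff, hfst]; omega
    simpa [hne] using toLineExponent_support_subset y this
  intro x y hxy
  have hfst_eq : x.1 = y.1 := by
    by_contra hne
    exact h₂ (by
      linear_combination -fst_eq_succ x y hxy hne - fst_eq_succ y x hxy.symm (Ne.symm hne))
  have hsnd := hfst x
  rw [hxy, hfst_eq, hfst y] at hsnd
  exact Prod.ext hfst_eq (Fin.ext (by omega))

theorem range_toLineExponent {k : ℕ} (hp : 2 ≤ p) (hk : 1 ≤ k) :
    Set.range (toLineExponent p k) = lineExponents p k := by
  have h₁ : (1 : ZMod p) ≠ 0 :=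
    mod_cast ZMod.natCast_ne_zero_of_lt (n := 1) (by norm_num) (by omega)
  ext d
  constructor
  · rintro ⟨x, rfl⟩
    refine ⟨?_, x.1, toLineExponent_support_subset x⟩
    simp only [toLineExponent, map_add, degree_single]
    omega
  · rintro ⟨hdeg, a, ha⟩
    have hd := eq_single_add_single_of_support_subset (fun h => h₁ (by simpa using h.symm)) ha
    have hsum : d a + d (a + 1) = k := by
      rw [← hdeg]; conv_rhs => rw [hd]
      simp only [map_add, degree_single]
    rcases Nat.eq_zero_or_pos (d a) with h0 | hpos
    · refine ⟨(a + 1, ⟨k - 1, by omega⟩), ?_⟩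
      conv_rhs => rw [hd, h0]
      simp only [toLineExponent, single_zero, zero_add, add_zero, Nat.sub_self]
      congr 1
      omega
    · refine ⟨(a, ⟨d a - 1, by omega⟩), ?_⟩
      conv_rhs => rw [hd]
      simp only [toLineExponent]
      congr 2 <;> omega

theorem ncard_lineExponents (hp : 3 ≤ p) {k : ℕ} (hk : 1 ≤ k) :
    (lineExponents p k).ncard = k * p := by
  rw [← range_toLineExponent (by omega) hk,
    Set.ncard_range_of_injective (toLineExponent_injective hp k), Nat.card_prod, Nat.card_zmod,
    Nat.card_eq_fintype_card, Fintype.card_fin, mul_comm]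

theorem lineExponents_zero : lineExponents p 0 = {0} := by
  ext d
  simp only [lineExponents, Set.mem_ofPred_eq, Set.mem_singleton_iff, degree_eq_zero_iff,
    and_iff_left_iff_imp]
  rintro rfl
  exact ⟨0, by simp⟩

theorem cycle_of_lines_hilbert_series_general (p : ℕ) (hodd : Odd p) (hp5 : 5 ≤ p) :
    (∀ k : ℕ, 1 ≤ k → Module.finrank ℂ (cycleDeg p k) = k * p) ∧
    PowerSeries.mk (fun k => (Module.finrank ℂ (cycleDeg p k) : ℂ)) * (1 - PowerSeries.X) ^ 2 =
      1 + PowerSeries.C ((p : ℂ) - 2) * PowerSeries.X + PowerSeries.X ^ 2 := by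
  have hdim : ∀ k, Module.finrank ℂ (cycleDeg p k) = (lineExponents p k).ncard := fun k => by
    rw [cycleDeg, MvPolynomial.finrank_map_homogeneousSubmodule_of_eq_span_monomial
      (cycleIdeal_eq_span_chordExponents hodd)]
    simp_rw [forall_not_le_chordExponents_iff, forall_not_isChord_iff (p := p) (by omega)]
    rfl
  have hpos : ∀ k, 1 ≤ k → Module.finrank ℂ (cycleDeg p k) = k * p := fun k hk =>
    (hdim k).trans (ncard_lineExponents (by omega) hk)
  refine ⟨hpos, PowerSeries.mk_mul_one_sub_X_sq _ ?_ fun n hn => ?_⟩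
  · simp [hdim, lineExponents_zero]
  · simp [hpos n hn]

/-- Let `S` be the quotient of `ℂ[x_0, …, x_{p-1}]` (`p` an odd prime ≥ 5)
by the ideal generated by all monomials `x_{i+k} x_{-i+k}` for `1 ≤ i ≤ (p-3)/2` and
`0 ≤ k ≤ p-1` (indices mod `p`).  Then for every degree `k ≥ 1`, `dim_ℂ S_k = k·p`, so
the Hilbert series of `S` is `(1 + (p-2)t + t^2)/(1-t)^2`. -/
theorem cycle_of_lines_hilbert_series (p : ℕ) (hp : p.Prime) (hodd : Odd p) (hp5 : 5 ≤ p) :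
    (∀ k : ℕ, 1 ≤ k → Module.finrank ℂ (cycleDeg p k) = k * p) ∧
    PowerSeries.mk (fun k => (Module.finrank ℂ (cycleDeg p k) : ℂ)) * (1 - PowerSeries.X) ^ 2 =
      1 + PowerSeries.C ((p : ℂ) - 2) * PowerSeries.X + PowerSeries.X ^ 2 :=
  cycle_of_lines_hilbert_series_general p hodd hp5
end

section
/- In the quotient ring S = ℂ[x_0,...,x_{p-1}]/(x_{i+k} x_{-i+k} : 1 ≤ i ≤ (p-3)/2, 0 ≤ k ≤ p-1) with p ≥ 5 prime and indices mod p, the monomials x_i^l x_{i+1}^{k-l} for 0 ≤ i ≤ p-1 and 1 ≤ l ≤ k-1, together with x_i^k for 0 ≤ i ≤ p-1, form a ℂ-basis of the degree-k component S_k for each k ≥ 2. -/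
open MvPolynomial

/-- The family of monomials `x_i^l x_{i+1}^{k-l}` (`1 ≤ l ≤ k`, `i` mod `p`) in the
quotient ring; for `l = k` this is `x_i^k`. -/
noncomputable def cycleMonomials (p k : ℕ)
    (q : {q : ZMod p × ℕ // 1 ≤ q.2 ∧ q.2 ≤ k}) :
    MvPolynomial (ZMod p) ℂ ⧸ cycleIdeal p :=
  Ideal.Quotient.mk (cycleIdeal p) (X q.1.1 ^ q.1.2 * X (q.1.1 + 1) ^ (k - q.1.2))

/- ### Auxiliary lemmas -/

def badSet (p : ℕ) : Set (ZMod p →₀ ℕ) :=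
  {e | ∃ i k : ZMod p, 1 ≤ i.val ∧ i.val ≤ (p - 3) / 2 ∧ e (k + i) ≠ 0 ∧ e (k - i) ≠ 0}

lemma cycTwoNeZero {p : ℕ} (hp : p.Prime) (hp5 : 5 ≤ p) : (2 : ZMod p) ≠ 0 := by
  intro h
  have h2 : ((2 : ℕ) : ZMod p) = 0 := by exact_mod_cast h
  have hd := (ZMod.natCast_eq_zero_iff 2 p).mp h2
  have := Nat.le_of_dvd (by norm_num) hd
  omega

lemma cycNegNeSelf {p : ℕ} (hp : p.Prime) (hp5 : 5 ≤ p) {i : ZMod p} (hi : i ≠ 0) :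
    i ≠ -i := by
  haveI : Fact p.Prime := ⟨hp⟩
  intro h
  have h2 : (2 : ZMod p) * i = 0 := by linear_combination h
  rcases mul_eq_zero.mp h2 with h' | h'
  · exact cycTwoNeZero hp hp5 h'
  · exact hi h'

lemma val_small {p : ℕ} (hp : p.Prime) (hodd : Odd p) (hp5 : 5 ≤ p) {i : ZMod p}
    (h0 : i ≠ 0) (h1 : 2 * i ≠ 1) (h2 : 2 * i ≠ -1) :
    i.val ≤ (p - 3) / 2 ∨ (-i).val ≤ (p - 3) / 2 := by
  haveI : NeZero p := ⟨by omega⟩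
  haveI : NeZero i := ⟨h0⟩
  by_contra hcon
  push_neg at hcon
  obtain ⟨hv1, hv2⟩ := hcon
  have hneg : (-i).val = p - i.val := ZMod.val_neg_of_ne_zero i
  have hlt : i.val < p := ZMod.val_lt i
  obtain ⟨m, hm⟩ := hodd
  have h2val : 2 * i.val = p - 1 ∨ 2 * i.val = p + 1 := by omega
  have hcast : ((i.val : ℕ) : ZMod p) = i := by rw [ZMod.natCast_val, ZMod.cast_id]
  have hcast2 : ((2 * i.val : ℕ) : ZMod p) = 2 * i := by push_cast [hcast]; ring
  rcases h2val with h | h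
  · apply h2
    rw [← hcast2, h, Nat.cast_sub (by omega : 1 ≤ p)]
    simp
  · apply h1
    rw [← hcast2, h]
    push_cast
    simp

lemma cycAdj {p : ℕ} (hp : p.Prime) (hodd : Odd p) (hp5 : 5 ≤ p) {e : ZMod p →₀ ℕ}
    (he : e ∉ badSet p) {a b : ZMod p} (ha : e a ≠ 0) (hb : e b ≠ 0) (hab : a ≠ b) :
    b = a + 1 ∨ a = b + 1 := by
  haveI : Fact p.Prime := ⟨hp⟩
  haveI : NeZero p := ⟨by omega⟩
  by_contra hcon
  push_neg at hcon
  obtain ⟨hc1, hc2⟩ := hcon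
  set i : ZMod p := (b - a) * (2 : ZMod p)⁻¹ with hidef
  have h2i : 2 * i = b - a := by
    rw [hidef, mul_comm, mul_assoc, inv_mul_cancel₀ (cycTwoNeZero hp hp5), mul_one]
  have h0 : i ≠ 0 := by
    intro h
    rw [h, mul_zero] at h2i
    exact hab (by linear_combination h2i)
  have h1 : 2 * i ≠ 1 := by
    rw [h2i]; intro h; exact hc1 (by linear_combination h)
  have h2 : 2 * i ≠ -1 := by
    rw [h2i]; intro h; exact hc2 (by linear_combination -h)
  have hval1 : 1 ≤ i.val := by
    have := (ZMod.val_eq_zero i).not.mpr h0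
    omega
  have hvalneg : 1 ≤ (-i).val := by
    have hn0 : -i ≠ 0 := fun h => h0 (by linear_combination -h)
    have := (ZMod.val_eq_zero (-i)).not.mpr hn0
    omega
  rcases val_small hp hodd hp5 h0 h1 h2 with hv | hv
  · exact he ⟨i, a + i, hval1, hv,
      by rwa [show a + i + i = b from by linear_combination h2i],
      by rwa [show a + i - i = a from by ring]⟩
  · exact he ⟨-i, b + -i, hvalneg, hv,
      by rwa [show b + -i + -i = a from by linear_combination -h2i],
      by rwa [show b + -i - -i = b from by ring]⟩


noncomputable def expOf (p k : ℕ) (q : {q : ZMod p × ℕ // 1 ≤ q.2 ∧ q.2 ≤ k}) :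
    ZMod p →₀ ℕ :=
  Finsupp.single q.1.1 q.1.2 + Finsupp.single (q.1.1 + 1) (k - q.1.2)

lemma monomial_mem_of_bad {p : ℕ} (hp : p.Prime) (hp5 : 5 ≤ p) {e : ZMod p →₀ ℕ}
    (he : e ∈ badSet p) (c : ℂ) :
    (monomial e c : MvPolynomial (ZMod p) ℂ) ∈ cycleIdeal p := by
  obtain ⟨i, k, hi1, hi2, ha, hb⟩ := he
  have hine : k + i ≠ k - i := by
    intro h
    have h0 : i ≠ 0 := fun h0 => by simp [h0] at hi1
    exact cycNegNeSelf hp hp5 h0 (by linear_combination h)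
  set g : ZMod p →₀ ℕ := Finsupp.single (k + i) 1 + Finsupp.single (k - i) 1 with hg
  have hge : g ≤ e := by
    rw [Finsupp.le_def]
    intro a
    rcases eq_or_ne a (k + i) with rfl | h1
    · have : g (k + i) = 1 := by
        simp [hg, Finsupp.single_apply, if_neg (Ne.symm hine)]
      rw [this]
      exact Nat.one_le_iff_ne_zero.mpr ha
    · rcases eq_or_ne a (k - i) with rfl | h2
      · have : g (k - i) = 1 := by
          simp [hg, Finsupp.single_apply, if_neg hine]
        rw [this]
        exact Nat.one_le_iff_ne_zero.mpr hb
      · have : g a = 0 := by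
          simp [hg, Finsupp.single_apply, if_neg (Ne.symm h1), if_neg (Ne.symm h2)]
        omega
  have key : (monomial e c : MvPolynomial (ZMod p) ℂ) =
      monomial (e - g) c * (X (k + i) * X (k - i)) := by
    rw [X, X, monomial_mul, monomial_mul, one_mul, mul_one, ← hg, tsub_add_cancel_of_le hge]
  rw [key]
  exact Ideal.mul_mem_left _ _ (Ideal.subset_span ⟨i, k, hi1, hi2, rfl⟩)

lemma support_bad_of_mem {p : ℕ} {f : MvPolynomial (ZMod p) ℂ} (hf : f ∈ cycleIdeal p) :
    ∀ e ∈ f.support, e ∈ badSet p := by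
  refine Submodule.span_induction ?_ ?_ ?_ ?_ hf
  · rintro x ⟨i, k, hi1, hi2, rfl⟩ e he
    have hx : (X (k + i) * X (k - i) : MvPolynomial (ZMod p) ℂ) =
        monomial (Finsupp.single (k + i) 1 + Finsupp.single (k - i) 1) 1 := by
      rw [X, X, monomial_mul, one_mul]
    rw [hx, support_monomial, if_neg (one_ne_zero : (1:ℂ) ≠ 0)] at he
    rw [Finset.mem_singleton] at he
    subst he
    exact ⟨i, k, hi1, hi2, by simp [Finsupp.single_apply], by simp [Finsupp.single_apply]⟩
  · simp
  · intro x y _ _ hx hy e he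
    rcases Finset.mem_union.mp (MvPolynomial.support_add he) with h | h
    · exact hx e h
    · exact hy e h
  · intro a x _ hx e he
    rw [smul_eq_mul] at he
    have hmem := MvPolynomial.support_mul a x he
    rcases Finset.mem_add.mp hmem with ⟨d, _, e', he', rfl⟩
    obtain ⟨i, k, hi1, hi2, ha, hb⟩ := hx e' he'
    exact ⟨i, k, hi1, hi2, by simp [Finsupp.add_apply]; omega, by simp [Finsupp.add_apply]; omega⟩

lemma pair_repr {p : ℕ} {e : ZMod p →₀ ℕ} {i j : ZMod p} (hij : i ≠ j)
    (h : ∀ b ∈ e.support, b = i ∨ b = j) :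
    e = Finsupp.single i (e i) + Finsupp.single j (e j) ∧ e.degree = e i + e j := by
  constructor
  · ext x
    rcases eq_or_ne x i with rfl | hxi
    · simp [Finsupp.single_apply, if_neg (Ne.symm hij)]
    · rcases eq_or_ne x j with rfl | hxj
      · simp [Finsupp.single_apply, if_neg hij]
      · have hx0 : e x = 0 := by
          by_contra h0
          rcases h x (Finsupp.mem_support_iff.mpr h0) with rfl | rfl
          · exact hxi rfl
          · exact hxj rfl
        simp [Finsupp.single_apply, if_neg (Ne.symm hxi), if_neg (Ne.symm hxj), hx0]
  · have hsub : e.support ⊆ {i, j} := by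
      intro b hb
      rcases h b hb with rfl | rfl <;> simp
    have hdeg : e.degree = ∑ x ∈ ({i, j} : Finset (ZMod p)), e x :=
      Finset.sum_subset hsub (fun x _ hx => Finsupp.notMem_support_iff.mp hx)
    rw [hdeg, Finset.sum_insert (by simp [hij]), Finset.sum_singleton]

lemma three_ne_zero_zmod {p : ℕ} (hp5 : 5 ≤ p) (h3 : (3 : ZMod p) = 0) : False := by
  have h3' : ((3 : ℕ) : ZMod p) = 0 := by exact_mod_cast h3
  have hd := (ZMod.natCast_eq_zero_iff 3 p).mp h3'
  have := Nat.le_of_dvd (by norm_num) hd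
  omega

lemma good_struct {p : ℕ} (hp : p.Prime) (hodd : Odd p) (hp5 : 5 ≤ p) {k : ℕ}
    (hk : 1 ≤ k) {e : ZMod p →₀ ℕ} (hgood : e ∉ badSet p) (hdeg : e.degree = k) :
    ∃ q, e = expOf p k q := by
  haveI : NeZero p := ⟨by omega⟩
  have hne : e.support.Nonempty := by
    by_contra h
    rw [Finset.not_nonempty_iff_eq_empty] at h
    rw [Finsupp.support_eq_empty.mp h] at hdeg
    simp [Finsupp.degree] at hdeg
    omega
  obtain ⟨a, haS⟩ := hne
  have haa : e a ≠ 0 := Finsupp.mem_support_iff.mp haS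
  have hone : (1 : ZMod p) ≠ 0 := by
    haveI : Fact (1 < p) := ⟨by omega⟩
    exact one_ne_zero
  by_cases hprev : a - 1 ∈ e.support
  · have hij : a - 1 ≠ a := fun h => hone (by linear_combination -h)
    have hprev' : e (a - 1) ≠ 0 := Finsupp.mem_support_iff.mp hprev
    have hsup : ∀ b ∈ e.support, b = a - 1 ∨ b = a := by
      intro b hb
      by_contra hcb
      push_neg at hcb
      obtain ⟨hb1, hb2⟩ := hcb
      have hbne : e b ≠ 0 := Finsupp.mem_support_iff.mp hb
      rcases cycAdj hp hodd hp5 hgood haa hbne (Ne.symm hb2) with h | h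
      · rcases cycAdj hp hodd hp5 hgood hprev' hbne (fun hh => hb1 hh.symm) with h' | h'
        · exact hb2 (by linear_combination h')
        · rw [h] at h'
          exact three_ne_zero_zmod hp5 (by linear_combination -h')
      · exact hb1 (by linear_combination -h)
    obtain ⟨heq, hdeg2⟩ := pair_repr hij hsup
    have hl1 : 1 ≤ e (a - 1) := Nat.one_le_iff_ne_zero.mpr hprev'
    have hlk : e (a - 1) ≤ k := by omega
    refine ⟨⟨(a - 1, e (a - 1)), hl1, hlk⟩, ?_⟩
    rw [expOf]
    simp only
    rw [show a - 1 + 1 = a from by ring, show k - e (a - 1) = e a from by omega]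
    exact heq
  · have hij : a ≠ a + 1 := fun h => hone (by linear_combination -h)
    have hsup : ∀ b ∈ e.support, b = a ∨ b = a + 1 := by
      intro b hb
      by_contra hcb
      push_neg at hcb
      obtain ⟨hb1, hb2⟩ := hcb
      have hbne : e b ≠ 0 := Finsupp.mem_support_iff.mp hb
      rcases cycAdj hp hodd hp5 hgood haa hbne (Ne.symm hb1) with h | h
      · exact hb2 h
      · exact hprev (Finsupp.mem_support_iff.mpr
          (by rwa [show a - 1 = b from by linear_combination h]))
    obtain ⟨heq, hdeg2⟩ := pair_repr hij hsup
    have hl1 : 1 ≤ e a := Nat.one_le_iff_ne_zero.mpr haa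
    have hlk : e a ≤ k := by omega
    refine ⟨⟨(a, e a), hl1, hlk⟩, ?_⟩
    rw [expOf]
    simp only
    rw [show k - e a = e (a + 1) from by omega]
    exact heq

lemma succ_ne_self_zmod {p : ℕ} (hp5 : 5 ≤ p) (i : ZMod p) : i + 1 ≠ i := by
  haveI : Fact (1 < p) := ⟨by omega⟩
  intro h
  exact (one_ne_zero : (1 : ZMod p) ≠ 0) (by linear_combination h)

lemma expOf_apply_fst {p k : ℕ} (hp5 : 5 ≤ p) (q : {q : ZMod p × ℕ // 1 ≤ q.2 ∧ q.2 ≤ k}) :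
    expOf p k q q.1.1 = q.1.2 := by
  rw [expOf, Finsupp.add_apply, Finsupp.single_apply, Finsupp.single_apply,
    if_pos rfl, if_neg (succ_ne_self_zmod hp5 q.1.1)]
  omega

lemma expOf_apply_snd {p k : ℕ} (hp5 : 5 ≤ p) (q : {q : ZMod p × ℕ // 1 ≤ q.2 ∧ q.2 ≤ k}) :
    expOf p k q (q.1.1 + 1) = k - q.1.2 := by
  rw [expOf, Finsupp.add_apply, Finsupp.single_apply, Finsupp.single_apply,
    if_pos rfl, if_neg (fun h => succ_ne_self_zmod hp5 q.1.1 h.symm)]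
  omega

lemma expOf_support {p k : ℕ} (q : {q : ZMod p × ℕ // 1 ≤ q.2 ∧ q.2 ≤ k}) {x : ZMod p}
    (hx : expOf p k q x ≠ 0) : x = q.1.1 ∨ x = q.1.1 + 1 := by
  by_contra h
  push_neg at h
  obtain ⟨h1, h2⟩ := h
  rw [expOf, Finsupp.add_apply, Finsupp.single_apply, Finsupp.single_apply,
    if_neg (fun hh => h1 hh.symm), if_neg (fun hh => h2 hh.symm)] at hx
  exact hx rfl

lemma expOf_degree {p k : ℕ} (hp5 : 5 ≤ p) (q : {q : ZMod p × ℕ // 1 ≤ q.2 ∧ q.2 ≤ k}) :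
    (expOf p k q).degree = k := by
  have hij : q.1.1 ≠ q.1.1 + 1 := fun h => succ_ne_self_zmod hp5 q.1.1 h.symm
  obtain ⟨-, hdeg⟩ := pair_repr (e := expOf p k q) hij
    (fun b hb => expOf_support q (Finsupp.mem_support_iff.mp hb))
  rw [hdeg, expOf_apply_fst hp5, expOf_apply_snd hp5]
  omega

lemma expOf_good {p k : ℕ} (hp : p.Prime) (hp5 : 5 ≤ p)
    (q : {q : ZMod p × ℕ // 1 ≤ q.2 ∧ q.2 ≤ k}) : expOf p k q ∉ badSet p := by
  haveI : NeZero p := ⟨by omega⟩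
  rintro ⟨j, m, hj1, hj2, ha, hb⟩
  have hj0 : j ≠ 0 := fun h => by simp [h] at hj1
  have hne : m + j ≠ m - j := fun h => cycNegNeSelf hp hp5 hj0 (by linear_combination h)
  have hjval : (2 * j).val = 2 * j.val := by
    have hlt : 2 * j.val < p := by
      have := ZMod.val_lt j
      omega
    have hcast : ((j.val : ℕ) : ZMod p) = j := by rw [ZMod.natCast_val, ZMod.cast_id]
    have : ((2 * j.val : ℕ) : ZMod p) = 2 * j := by push_cast [hcast]; ring
    rw [← this, ZMod.val_natCast_of_lt hlt]
  rcases expOf_support q ha with h1 | h1 <;> rcases expOf_support q hb with h2 | h2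
  · exact hne (h1.trans h2.symm)
  · -- m + j = i, m - j = i + 1 : 2j = -1
    have h2j : 2 * j = -1 := by rw [← h1] at h2; linear_combination -h2
    have : (2 * j).val = p - 1 := by
      haveI : Fact (1 < p) := ⟨by omega⟩
      haveI : NeZero (1 : ZMod p) := ⟨one_ne_zero⟩
      rw [h2j, ZMod.val_neg_of_ne_zero (1 : ZMod p), ZMod.val_one]
    omega
  · -- m + j = i + 1, m - j = i : 2j = 1
    have h2j : 2 * j = 1 := by rw [← h2] at h1; linear_combination h1
    have : (2 * j).val = 1 := by
      rw [h2j]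
      haveI : Fact (1 < p) := ⟨by omega⟩
      exact ZMod.val_one p
    omega
  · exact hne (h1.trans h2.symm)

lemma expOf_inj {p k : ℕ} (hp : p.Prime) (hp5 : 5 ≤ p) :
    Function.Injective (expOf p k) := by
  haveI : NeZero p := ⟨by omega⟩
  rintro ⟨⟨i, l⟩, hl1, hl2⟩ ⟨⟨i', l'⟩, hl1', hl2'⟩ h
  have hval : ∀ x, expOf p k ⟨(i, l), hl1, hl2⟩ x = expOf p k ⟨(i', l'), hl1', hl2'⟩ x :=
    fun x => by rw [h]
  have hii' : i = i' := by
    by_contra hne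
    have h1 : expOf p k ⟨(i', l'), hl1', hl2'⟩ i ≠ 0 := by
      rw [← hval i, expOf_apply_fst hp5]
      simpa using Nat.one_le_iff_ne_zero.mp hl1
    have h2 : expOf p k ⟨(i, l), hl1, hl2⟩ i' ≠ 0 := by
      rw [hval i', expOf_apply_fst hp5]
      simpa using Nat.one_le_iff_ne_zero.mp hl1'
    rcases expOf_support _ h1 with hx | hx
    · exact hne hx
    · rcases expOf_support _ h2 with hy | hy
      · exact hne hy.symm
      · -- i = i' + 1 and i' = i + 1
        have h2z : (2 : ZMod p) = 0 := by
          simp only at hx hy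
          rw [hy] at hx
          linear_combination -hx
        exact cycTwoNeZero hp hp5 h2z
  have hll' : l = l' := by
    have := hval i
    rw [expOf_apply_fst hp5] at this
    subst hii'
    rw [expOf_apply_fst hp5] at this
    exact this
  subst hii' hll'
  rfl



/-- In the quotient ring `S = ℂ[x_0,…,x_{p-1}]/(x_{i+k} x_{-i+k})` with
`p ≥ 5` prime and indices mod `p`, the monomials `x_i^l x_{i+1}^{k-l}` for
`0 ≤ i ≤ p-1`, `1 ≤ l ≤ k-1`, together with the `x_i^k`, form a `ℂ`-basis of the
degree-`k` component `S_k` for each `k ≥ 2`. -/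
theorem cycle_of_lines_basis (p : ℕ) (hp : p.Prime) (hodd : Odd p) (hp5 : 5 ≤ p)
    (k : ℕ) (hk : 2 ≤ k) :
    LinearIndependent ℂ (cycleMonomials p k) ∧
    Submodule.span ℂ (Set.range (cycleMonomials p k)) = cycleDeg p k := by
  haveI : NeZero p := ⟨by omega⟩
  set f := (Ideal.Quotient.mkₐ ℂ (cycleIdeal p)).toLinearMap with hfdef
  have hmono : ∀ q, (X q.1.1 ^ q.1.2 * X (q.1.1 + 1) ^ (k - q.1.2) :
      MvPolynomial (ZMod p) ℂ) = monomial (expOf p k q) 1 := by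
    intro q
    rw [X_pow_eq_monomial, X_pow_eq_monomial, monomial_mul, one_mul, expOf]
  have hcm : ∀ q, cycleMonomials p k q = f (monomial (expOf p k q) 1) := by
    intro q
    rw [cycleMonomials, hmono q, hfdef]
    simp [Ideal.Quotient.mkₐ_eq_mk]
  -- linear independence of preimage monomials
  have hLI0 : LinearIndependent ℂ (fun q => (monomial (expOf p k q) (1 : ℂ))) := by
    have hb := (MvPolynomial.basisMonomials (ZMod p) ℂ).linearIndependent
    have := hb.comp (expOf p k) (expOf_inj hp hp5)
    rwa [coe_basisMonomials] at this
  -- disjointness with the kernel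
  have hdisj : Disjoint
      (Submodule.span ℂ (Set.range fun q => (monomial (expOf p k q) (1 : ℂ))))
      (LinearMap.ker f) := by
    rw [Submodule.disjoint_def]
    intro x hx hker
    have hxI : x ∈ cycleIdeal p := by
      have hz : Ideal.Quotient.mk (cycleIdeal p) x = 0 := by
        have := LinearMap.mem_ker.mp hker
        rwa [hfdef, AlgHom.toLinearMap_apply, Ideal.Quotient.mkₐ_eq_mk] at this
      exact Ideal.Quotient.eq_zero_iff_mem.mp hz
    have hsupp : ∀ d ∈ x.support, ∃ q, d = expOf p k q := by
      refine Submodule.span_induction ?_ ?_ ?_ ?_ hx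
      · rintro y ⟨q, rfl⟩ d hd
        rw [support_monomial, if_neg (one_ne_zero : (1:ℂ) ≠ 0), Finset.mem_singleton] at hd
        exact ⟨q, hd⟩
      · simp
      · intro y z _ _ hy hz d hd
        rcases Finset.mem_union.mp (MvPolynomial.support_add hd) with h | h
        · exact hy d h
        · exact hz d h
      · intro c y _ hy d hd
        exact hy d (MvPolynomial.support_smul hd)
    have hempty : x.support = ∅ := by
      refine Finset.eq_empty_of_forall_notMem (fun d hd => ?_)
      obtain ⟨q, rfl⟩ := hsupp d hd
      exact expOf_good hp hp5 q (support_bad_of_mem hxI _ hd)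
    exact MvPolynomial.support_eq_empty.mp hempty
  constructor
  · have heq : cycleMonomials p k = ⇑f ∘ (fun q => (monomial (expOf p k q) (1 : ℂ))) := by
      funext q
      exact hcm q
    rw [heq]
    exact hLI0.map hdisj
  · apply le_antisymm
    · rw [Submodule.span_le]
      rintro _ ⟨q, rfl⟩
      rw [cycleDeg]
      refine ⟨X q.1.1 ^ q.1.2 * X (q.1.1 + 1) ^ (k - q.1.2), ?_, rfl⟩
      rw [SetLike.mem_coe, mem_homogeneousSubmodule, hmono q]
      exact isHomogeneous_monomial _ (expOf_degree hp5 q)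
    · rintro y ⟨g, hg, rfl⟩
      have hgh := (mem_homogeneousSubmodule _ _).mp hg
      show f g ∈ _
      rw [← support_sum_monomial_coeff g, map_sum]
      apply Submodule.sum_mem
      intro e he
      have hco : coeff e g ≠ 0 := mem_support_iff.mp he
      have hdeg : e.degree = k := by
        by_contra h
        exact hco (hgh.coeff_eq_zero h)
      by_cases hbad : e ∈ badSet p
      · have hz : f (monomial e (coeff e g)) = 0 := by
          rw [hfdef, AlgHom.toLinearMap_apply, Ideal.Quotient.mkₐ_eq_mk,
            Ideal.Quotient.eq_zero_iff_mem]
          exact monomial_mem_of_bad hp hp5 hbad _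
        rw [hz]
        exact Submodule.zero_mem _
      · obtain ⟨q, rfl⟩ := good_struct hp hodd hp5 (by omega) hbad hdeg
        have hsm : (monomial (expOf p k q) (coeff (expOf p k q) g)) =
            (coeff (expOf p k q) g) • monomial (expOf p k q) (1 : ℂ) := by
          rw [smul_monomial, smul_eq_mul, mul_one]
        rw [hsm, map_smul]
        exact Submodule.smul_mem _ _ (Submodule.subset_span ⟨q, hcm q⟩)
end

section
/- Let p be an odd prime and a_1, ..., a_{(p-1)/2} ∈ ℂ. Let C be the ℂ-algebra generated by x_0, ..., x_{p-1} (indices mod p) with relations x_{i+k} x_{-i+k} + x_{-i+k} x_{i+k} = a_i x_k^2 for 1 ≤ i ≤ (p-1)/2 and 0 ≤ k ≤ p-1. Suppose some a_i ≠ 0 and there exists an algebra homomorphism φ: C → ℂ with φ not identically zero on the generators and φ(x_0) = 1. Then, setting y_j = φ(x_j), for all k ≥ 0 one has y_{ki} = a_i^{C(k,2)} y_i^k / 2^{C(k,2)}, where C(k,2) = k(k-1)/2. -/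
/-- The relations `x_{i+k} x_{-i+k} + x_{-i+k} x_{i+k} = a_i x_k^2`
(`1 ≤ i ≤ (p-1)/2`, `k ∈ ℤ/p`) of the `H_p`-Clifford algebra. -/
inductive HeisCliffRel (p : ℕ) (a : ZMod p → ℂ) :
    FreeAlgebra ℂ (ZMod p) → FreeAlgebra ℂ (ZMod p) → Prop
  | of (i k : ZMod p) (h1 : 1 ≤ i.val) (h2 : i.val ≤ (p - 1) / 2) :
      HeisCliffRel p a
        (FreeAlgebra.ι ℂ (k + i) * FreeAlgebra.ι ℂ (k - i) +
          FreeAlgebra.ι ℂ (k - i) * FreeAlgebra.ι ℂ (k + i))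
        (a i • (FreeAlgebra.ι ℂ k * FreeAlgebra.ι ℂ k))

/-- The `H_p`-Clifford algebra `C` generated by `x_0,…,x_{p-1}` with relations
`{x_{i+k}, x_{-i+k}} = a_i x_k^2`. -/
noncomputable def HeisClifford (p : ℕ) (a : ZMod p → ℂ) : Type :=
  RingQuot (HeisCliffRel p a)

noncomputable instance (p : ℕ) (a : ZMod p → ℂ) : Ring (HeisClifford p a) :=
  inferInstanceAs (Ring (RingQuot (HeisCliffRel p a)))

noncomputable instance (p : ℕ) (a : ZMod p → ℂ) : Algebra ℂ (HeisClifford p a) :=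
  inferInstanceAs (Algebra ℂ (RingQuot (HeisCliffRel p a)))

/-- The generator `x_j` of the `H_p`-Clifford algebra. -/
noncomputable def heisCliffGen (p : ℕ) (a : ZMod p → ℂ) (j : ZMod p) :
    HeisClifford p a :=
  RingQuot.mkAlgHom ℂ (HeisCliffRel p a) (FreeAlgebra.ι ℂ j)

/-! Applying `φ` to the relation with `k = (n + 1) i` shows that `y_n := φ(x_{n i})` satisfies
`2 y_{n+2} y_n = a_i y_{n+1}^2`, and the relation with `k = 0` gives `2 y_i y_{-i} = a_i ≠ 0`, so
`y_1 ≠ 0`. Starting from `y_0 = 1`, all `y_n` are then nonzero and the recurrence determines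
`y_{n+2}` from `y_n` and `y_{n+1}`; the closed form `a_i^{C(n,2)} y_1^n / 2^{C(n,2)}` satisfies it
because `C(n+2,2) + C(n,2) = 2 C(n+1,2) + 1`. -/

section ChooseTwoRecurrence

variable {K : Type*} [Field K] [NeZero (2 : K)]

theorem two_mul_choose_two_pow_mul_eq (c u : K) (n : ℕ) :
    2 * (c ^ (n + 2).choose 2 * u ^ (n + 2) / 2 ^ (n + 2).choose 2 *
        (c ^ n.choose 2 * u ^ n / 2 ^ n.choose 2)) =
      c * (c ^ (n + 1).choose 2 * u ^ (n + 1) / 2 ^ (n + 1).choose 2) ^ 2 := by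
  have h1 : (n + 1).choose 2 = n.choose 2 + n := by
    simp [Nat.choose_succ_succ', add_comm]
  have h2 : (n + 2).choose 2 = n.choose 2 + n + (n + 1) := by
    rw [Nat.choose_succ_succ', h1, Nat.choose_one_right]
    ring
  rw [h1, h2]
  have := NeZero.ne (2 : K)
  field_simp
  ring

theorem eq_choose_two_pow_of_two_mul_mul_eq {c : K} (hc : c ≠ 0)
    {y : ℕ → K} (h0 : y 0 = 1) (h1 : y 1 ≠ 0)
    (hrec : ∀ n, 2 * (y (n + 2) * y n) = c * y (n + 1) ^ 2) (n : ℕ) :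
    y n = c ^ n.choose 2 * y 1 ^ n / 2 ^ n.choose 2 := by
  induction n using Nat.twoStepInduction with
  | zero => simpa using h0
  | one => simp
  | more n ihn ihn1 =>
    have hne : c ^ n.choose 2 * y 1 ^ n / 2 ^ n.choose 2 ≠ 0 := by
      have := NeZero.ne (2 : K)
      positivity
    refine mul_right_cancel₀ hne (mul_left_cancel₀ (NeZero.ne (2 : K)) ?_)
    rw [← ihn, hrec, ihn1, ← two_mul_choose_two_pow_mul_eq, ihn]

end ChooseTwoRecurrence

namespace HeisClifford

variable {p : ℕ} {a : ZMod p → ℂ}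

theorem anticomm_gen_add_gen_sub {i : ZMod p} (hi1 : 1 ≤ i.val) (hi2 : i.val ≤ (p - 1) / 2)
    (k : ZMod p) :
    heisCliffGen p a (k + i) * heisCliffGen p a (k - i) +
        heisCliffGen p a (k - i) * heisCliffGen p a (k + i) =
      a i • (heisCliffGen p a k * heisCliffGen p a k) := by
  have h := RingQuot.mkAlgHom_rel ℂ (HeisCliffRel.of (a := a) i k hi1 hi2)
  simp only [map_add, map_mul, map_smul] at h
  exact h

theorem two_mul_map_gen_add_mul_map_gen_sub {A : Type*} [CommRing A] [Algebra ℂ A]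
    (φ : HeisClifford p a →ₐ[ℂ] A) {i : ZMod p} (hi1 : 1 ≤ i.val)
    (hi2 : i.val ≤ (p - 1) / 2) (k : ZMod p) :
    2 * (φ (heisCliffGen p a (k + i)) * φ (heisCliffGen p a (k - i))) =
      a i • φ (heisCliffGen p a k) ^ 2 := by
  have h := congrArg φ (anticomm_gen_add_gen_sub (a := a) hi1 hi2 k)
  simp only [map_add, map_mul, map_smul] at h
  rw [two_mul, sq, ← h, mul_comm (φ _)]

theorem map_gen_ne_zero {A : Type*} [CommRing A] [Nontrivial A] [Algebra ℂ A]
    (φ : HeisClifford p a →ₐ[ℂ] A) (h0 : φ (heisCliffGen p a 0) = 1) {i : ZMod p}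
    (hi1 : 1 ≤ i.val) (hi2 : i.val ≤ (p - 1) / 2) (ha : a i ≠ 0) :
    φ (heisCliffGen p a i) ≠ 0 := by
  intro hzero
  have h := two_mul_map_gen_add_mul_map_gen_sub φ hi1 hi2 0
  rw [zero_add, hzero, h0, zero_mul, mul_zero, one_pow, eq_comm, smul_eq_zero] at h
  exact h.elim ha one_ne_zero

end HeisClifford

open HeisClifford in
theorem heisenberg_clifford_one_dim_rep_general (p : ℕ)
    (a : ZMod p → ℂ) (i : ZMod p) (hi1 : 1 ≤ i.val) (hi2 : i.val ≤ (p - 1) / 2)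
    (ha : a i ≠ 0) (φ : HeisClifford p a →ₐ[ℂ] ℂ)
    (h0 : φ (heisCliffGen p a 0) = 1) :
    ∀ k : ℕ, φ (heisCliffGen p a ((k : ZMod p) * i)) =
      a i ^ k.choose 2 * φ (heisCliffGen p a i) ^ k / 2 ^ k.choose 2 := by
  intro k
  have hrec (n : ℕ) : 2 * (φ (heisCliffGen p a ((n + 2 : ℕ) * i)) *
      φ (heisCliffGen p a (n * i))) = a i * φ (heisCliffGen p a ((n + 1 : ℕ) * i)) ^ 2 := by
    convert two_mul_map_gen_add_mul_map_gen_sub φ hi1 hi2 ((n + 1 : ℕ) * i) using 5 <;>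
      push_cast <;> ring
  simpa using eq_choose_two_pow_of_two_mul_mul_eq
    (y := fun n : ℕ => φ (heisCliffGen p a (n * i))) ha (by simpa using h0)
    (by simpa using map_gen_ne_zero φ h0 hi1 hi2 ha) hrec k

/-- Let `p` be an odd prime and `a_1,…,a_{(p-1)/2} ∈ ℂ`.  Let `C` be the
`ℂ`-algebra generated by `x_0,…,x_{p-1}` (indices mod `p`) with relations
`x_{i+k} x_{-i+k} + x_{-i+k} x_{i+k} = a_i x_k^2`.  Suppose some `a_i ≠ 0` and there is
an algebra homomorphism `φ : C → ℂ`, not identically zero on the generators, with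
`φ(x_0) = 1`.  Then, setting `y_j = φ(x_j)`, for all `k ≥ 0` one has
`y_{ki} = a_i^{C(k,2)} y_i^k / 2^{C(k,2)}`, where `C(k,2) = k(k-1)/2`. -/
theorem heisenberg_clifford_one_dim_rep (p : ℕ) (hp : p.Prime) (hodd : Odd p)
    (a : ZMod p → ℂ) (i : ZMod p) (hi1 : 1 ≤ i.val) (hi2 : i.val ≤ (p - 1) / 2)
    (ha : a i ≠ 0) (φ : HeisClifford p a →ₐ[ℂ] ℂ)
    (hnz : ∃ j : ZMod p, φ (heisCliffGen p a j) ≠ 0)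
    (h0 : φ (heisCliffGen p a 0) = 1) :
    ∀ k : ℕ, φ (heisCliffGen p a ((k : ZMod p) * i)) =
      a i ^ k.choose 2 * φ (heisCliffGen p a i) ^ k / 2 ^ k.choose 2 :=
  heisenberg_clifford_one_dim_rep_general p a i hi1 hi2 ha φ h0
end

section
/- With the notation of the previous setup (H_p-Clifford algebra C with relations {x_{i+k},x_{-i+k}} = a_i x_k^2, a_i ≠ 0, and a 1-dimensional representation φ with φ(x_0)=1, y_j = φ(x_j)): one has a_i^p = 2^p, and y_i is a p-th root of unity. -/
section Recurrence

variable {K : Type*} [Field K]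

theorem eq_pow_choose_two_mul_pow_of_mul_eq_mul_sq {z : ℕ → K} {c : K} (hc : c ≠ 0)
    (h0 : z 0 = 1) (h1 : z 1 ≠ 0) (hrec : ∀ m, z (m + 2) * z m = c * z (m + 1) ^ 2)
    (m : ℕ) : z m = c ^ m.choose 2 * z 1 ^ m := by
  induction m using Nat.twoStepInduction with
  | zero => simp [h0]
  | one => simp
  | more m ih₀ ih₁ =>
    have hzm : z m ≠ 0 := by rw [ih₀]; exact mul_ne_zero (pow_ne_zero _ hc) (pow_ne_zero _ h1)
    have e₁ : (m + 1).choose 2 = m.choose 2 + m := by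
      rw [Nat.choose_succ_succ', Nat.choose_one_right, add_comm]
    have e₂ : (m + 2).choose 2 = m.choose 2 + m + (m + 1) := by
      rw [Nat.choose_succ_succ' (m + 1), Nat.choose_one_right, e₁]
      omega
    apply mul_right_cancel₀ hzm
    rw [hrec, ih₁, ih₀, e₁, e₂]
    ring

theorem pow_eq_one_of_pow_choose_two_mul_pow {c w : K} {p : ℕ} (hp : Odd p) (hw : w ≠ 0)
    (hw₀ : c ^ p.choose 2 * w ^ p = 1) (hw₁ : c ^ (p + 1).choose 2 * w ^ (p + 1) = w) :
    c ^ p = 1 ∧ w ^ p = 1 := by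
  have hcp : c ^ p = 1 := by
    have h : c ^ p * w * (c ^ p.choose 2 * w ^ p) = w := by
      rw [Nat.choose_succ_succ', Nat.choose_one_right] at hw₁
      linear_combination hw₁
    rw [hw₀, mul_one] at h
    exact mul_right_cancel₀ hw (h.trans (one_mul w).symm)
  have hchoose : p.choose 2 = p * ((p - 1) / 2) := by
    rw [Nat.choose_two_right, Nat.mul_div_assoc _ (Nat.Odd.sub_odd hp odd_one).two_dvd]
  refine ⟨hcp, ?_⟩
  rwa [hchoose, pow_mul, hcp, one_pow, one_mul] at hw₀

theorem pow_eq_two_pow_and_pow_eq_one_of_two_mul_mul_eq [NeZero (2 : K)] {p : ℕ} (hp : Odd p)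
    {y : ZMod p → K} {b : K} (hb : b ≠ 0) (i : ZMod p)
    (hrel : ∀ k, 2 * (y (k + i) * y (k - i)) = b * y k ^ 2) (h0 : y 0 = 1) :
    b ^ p = 2 ^ p ∧ y i ^ p = 1 := by
  have h2 : (2 : K) ≠ 0 := two_ne_zero
  set z : ℕ → K := fun m => y (m * i) with hz
  have hrec : ∀ m, z (m + 2) * z m = b / 2 * z (m + 1) ^ 2 := by
    intro m
    have h := hrel ((m + 1 : ℕ) * i)
    rw [show ((m + 1 : ℕ) : ZMod p) * i + i = (m + 2 : ℕ) * i by push_cast; ring,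
      show ((m + 1 : ℕ) : ZMod p) * i - i = m * i by push_cast; ring] at h
    field_simp
    linear_combination h
  have hz1 : z 1 ≠ 0 := by
    intro hy
    have h := hrel 0
    simp only [hz, Nat.cast_one, one_mul] at hy
    simp only [zero_add, hy, zero_sub, zero_mul, mul_zero, h0, one_pow, mul_one] at h
    exact hb h.symm
  have hclosed := eq_pow_choose_two_mul_pow_of_mul_eq_mul_sq (div_ne_zero hb h2)
    (by simp [hz, h0]) hz1 hrec
  have hw₀ : (b / 2) ^ p.choose 2 * z 1 ^ p = 1 := by rw [← hclosed]; simp [hz, h0]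
  have hw₁ : (b / 2) ^ (p + 1).choose 2 * z 1 ^ (p + 1) = z 1 := by
    rw [← hclosed]; simp [hz]
  obtain ⟨hcp, hwp⟩ := pow_eq_one_of_pow_choose_two_mul_pow hp hz1 hw₀ hw₁
  rw [div_pow, div_eq_one_iff_eq (pow_ne_zero _ h2)] at hcp
  simpa [hz] using And.intro hcp hwp

end Recurrence

theorem heisCliffGen_anticomm {p : ℕ} (a : ZMod p → ℂ) (i k : ZMod p) (h1 : 1 ≤ i.val)
    (h2 : i.val ≤ (p - 1) / 2) :
    heisCliffGen p a (k + i) * heisCliffGen p a (k - i) +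
        heisCliffGen p a (k - i) * heisCliffGen p a (k + i) =
      a i • (heisCliffGen p a k * heisCliffGen p a k) := by
  have h := RingQuot.mkAlgHom_rel ℂ (HeisCliffRel.of (a := a) i k h1 h2)
  simp only [map_add, map_mul, map_smul] at h
  exact h

theorem two_mul_map_heisCliffGen {A : Type*} [CommRing A] [Algebra ℂ A] {p : ℕ}
    {a : ZMod p → ℂ} (φ : HeisClifford p a →ₐ[ℂ] A) (i k : ZMod p) (h1 : 1 ≤ i.val)
    (h2 : i.val ≤ (p - 1) / 2) :
    2 * (φ (heisCliffGen p a (k + i)) * φ (heisCliffGen p a (k - i))) =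
      a i • φ (heisCliffGen p a k) ^ 2 := by
  have h := congrArg φ (heisCliffGen_anticomm a i k h1 h2)
  rw [map_add, map_mul, map_mul, map_smul, map_mul] at h
  rw [two_mul, sq, ← h, mul_comm (φ _)]

theorem heisenberg_clifford_one_dim_rep_root_of_unity_general (p : ℕ)
    (hodd : Odd p)
    (a : ZMod p → ℂ) (i : ZMod p) (hi1 : 1 ≤ i.val) (hi2 : i.val ≤ (p - 1) / 2)
    (ha : a i ≠ 0) (φ : HeisClifford p a →ₐ[ℂ] ℂ)
    (h0 : φ (heisCliffGen p a 0) = 1) :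
    a i ^ p = 2 ^ p ∧ φ (heisCliffGen p a i) ^ p = 1 :=
  pow_eq_two_pow_and_pow_eq_one_of_two_mul_mul_eq hodd (y := fun j => φ (heisCliffGen p a j))
    ha i
    (fun k => by simpa only [smul_eq_mul] using two_mul_map_heisCliffGen φ i k hi1 hi2) h0

/-- With the notation of the previous setup (`H_p`-Clifford algebra `C`
with relations `{x_{i+k}, x_{-i+k}} = a_i x_k^2`, `a_i ≠ 0`, and a 1-dimensional
representation `φ` with `φ(x_0) = 1`, `y_j = φ(x_j)`): one has `a_i^p = 2^p`, and `y_i`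
is a `p`-th root of unity. -/
theorem heisenberg_clifford_one_dim_rep_root_of_unity (p : ℕ) (hp : p.Prime)
    (hodd : Odd p)
    (a : ZMod p → ℂ) (i : ZMod p) (hi1 : 1 ≤ i.val) (hi2 : i.val ≤ (p - 1) / 2)
    (ha : a i ≠ 0) (φ : HeisClifford p a →ₐ[ℂ] ℂ)
    (hnz : ∃ j : ZMod p, φ (heisCliffGen p a j) ≠ 0)
    (h0 : φ (heisCliffGen p a 0) = 1) :
    a i ^ p = 2 ^ p ∧ φ (heisCliffGen p a i) ^ p = 1 :=
  heisenberg_clifford_one_dim_rep_root_of_unity_general p hodd a i hi1 hi2 ha φ h0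
end
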